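/- arXiv:math/0507449 — 2 statements merged into one kernel-verified Lean document; each statement's English description precedes it below -/
import Mathlib

section
/- Fix d ≥ 1. Let E be the quotient of the space of pairs of complex polynomials (Σ_{j=0}^d α_j u^j, Σ_{j=0}^d β_j u^j) with (α_d, β_d) ≠ (0,0) by the free ℂ* action of coefficientwise multiplication, and let π : E → ℙ¹(ℂ) be π([P:Q]) = (α_d : β_d). Then π is a locally trivial holomorphic fiber bundle. -/
noncomputable section

/-- Topology on projectivizations (quotient of the subspace of nonzero vectors).
The projectivization of a vector space is exactly the quotient of the nonzero
vectors by the scaling action of the multiplicative group of the field. -/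
instance projTop (K V : Type*) [DivisionRing K] [AddCommGroup V] [Module K V]
    [TopologicalSpace V] : TopologicalSpace (Projectivization K V) :=
  inferInstanceAs (TopologicalSpace (Quotient (projectivizationSetoid K V)))

/-- The complex projective line ℙ¹(ℂ). -/
abbrev P1 := Projectivization ℂ (Fin 2 → ℂ)

/-- Pairs of polynomials of degree ≤ d, recorded by their coefficients. -/
abbrev PairSpace (d : ℕ) := (Fin (d + 1) → ℂ) × (Fin (d + 1) → ℂ)

/-- `E d`: the quotient of the space of pairs of polynomials of degree ≤ d whose
leading coefficients are not both zero, by the free ℂ* action of coefficientwise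
multiplication. (This quotient is precisely the subset of the projectivization
of the coefficient space where the leading coefficients do not both vanish; the
condition is independent of the chosen representative.) -/
def EE (d : ℕ) : Type :=
  {v : Projectivization ℂ (PairSpace d) //
    ![v.rep.1 (Fin.last d), v.rep.2 (Fin.last d)] ≠ 0}

instance (d : ℕ) : TopologicalSpace (EE d) :=
  inferInstanceAs (TopologicalSpace {v : Projectivization ℂ (PairSpace d) //
    ![v.rep.1 (Fin.last d), v.rep.2 (Fin.last d)] ≠ 0})

/-- The projection π : E → ℙ¹(ℂ) to the leading coefficients (α_d : β_d). -/
def pr (d : ℕ) (e : EE d) : P1 :=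
  Projectivization.mk ℂ ![e.1.rep.1 (Fin.last d), e.1.rep.2 (Fin.last d)] e.2

/-!
`GL₂(ℂ)` acts on pairs of polynomials by `(P, Q) ↦ (aP + bQ, cP + dQ)`. The action commutes with
scalars, so it descends to `E`, and it acts on the leading coefficients `(α_d, β_d)` by the same
matrix, so `π` is equivariant. The orbit map `g ↦ g • [0 : 1]` of `ℙ¹` has continuous sections `s`
over the two standard affine charts, read off from `[z : 1] = !![1, z; 0, 1] • [0 : 1]` and
`[1 : z] = swap • [z : 1]`, and over such a chart `U` the map `(b, f) ↦ s b • f` identifies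
`U × π⁻¹[0 : 1]` with `π⁻¹ U`.
-/

open scoped LinearAlgebra.Projectivization
open Set Topology

namespace Bundle.Trivialization

variable {G B E : Type*} [Group G] [TopologicalSpace G] [ContinuousInv G]
  [TopologicalSpace B] [TopologicalSpace E] [MulAction G B] [MulAction G E] [ContinuousSMul G E]

open Classical in
def ofOrbitMapSection (proj : E → B) (hproj : Continuous proj)
    (hprojG : ∀ (g : G) x, proj (g • x) = g • proj x) (b₀ : B) [Nonempty (proj ⁻¹' {b₀})]
    {U : Set B} (hU : IsOpen U) (s : B → G) (hs : ContinuousOn s U) (hsb : ∀ b ∈ U, s b • b₀ = b) :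
    Trivialization (proj ⁻¹' {b₀}) proj where
  toFun x := (proj x, if hx : proj x ∈ U then
    ⟨(s (proj x))⁻¹ • x, by
      rw [mem_preimage, hprojG, mem_singleton_iff, inv_smul_eq_iff, hsb _ hx]⟩
    else Classical.arbitrary _)
  invFun p := s p.1 • (p.2 : E)
  source := proj ⁻¹' U
  target := U ×ˢ univ
  map_source' _ hx := ⟨hx, trivial⟩
  map_target' p hp := by
    rw [mem_preimage, hprojG, p.2.2, hsb _ hp.1]; exact hp.1
  left_inv' x hx := by simp only [dif_pos (show proj x ∈ U from hx), smul_inv_smul]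
  right_inv' p hp := by
    have hp₁ : proj (s p.1 • (p.2 : E)) = p.1 := by rw [hprojG, p.2.2, hsb _ hp.1]
    ext
    · exact hp₁
    · simp only [hp₁, dif_pos hp.1, inv_smul_smul]
  open_source := hU.preimage hproj
  open_target := hU.prod isOpen_univ
  continuousOn_toFun := by
    refine hproj.continuousOn.prodMk (Topology.IsInducing.subtypeVal.continuousOn_iff.2 ?_)
    refine ((hs.comp hproj.continuousOn fun _ hx => hx).inv.smul continuousOn_id).congr
      fun x hx => ?_
    simp only [Function.comp_apply, dif_pos (show proj x ∈ U from hx)]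
    rfl
  continuousOn_invFun :=
    (hs.comp continuousOn_fst fun _ hp => hp.1).smul
      (continuous_subtype_val.comp continuous_snd).continuousOn
  baseSet := U
  open_baseSet := hU
  source_eq := rfl
  target_eq := rfl
  proj_toFun _ _ := rfl

end Bundle.Trivialization

namespace Projectivization

section Linear

variable {K V W : Type*} [DivisionRing K] [AddCommGroup V] [Module K V] [AddCommGroup W]
  [Module K W]

theorem map_rep_mk_ne_zero_iff (f : V →ₗ[K] W) {v : V} (hv : v ≠ 0) :
    f (mk K v hv).rep ≠ 0 ↔ f v ≠ 0 := by
  obtain ⟨a, ha⟩ := exists_smul_eq_mk_rep K v hv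
  rw [← ha, Units.smul_def, map_smul, ← Units.smul_def, smul_ne_zero_iff_ne]

theorem mk_map_rep_mk (f : V →ₗ[K] W) {v : V} (hv : v ≠ 0) (h : f (mk K v hv).rep ≠ 0) :
    mk K (f (mk K v hv).rep) h = mk K (f v) ((map_rep_mk_ne_zero_iff f hv).1 h) := by
  obtain ⟨a, ha⟩ := exists_smul_eq_mk_rep K v hv
  refine (mk_eq_mk_iff K _ _ _ _).2 ⟨a, ?_⟩
  simp only [← ha, Units.smul_def, map_smul]

variable {G : Type*} [Group G] [DistribMulAction G V] [SMulCommClass G K V]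
  [DistribMulAction G W]

theorem map_rep_smul_ne_zero_iff (f : V →ₗ[K] W) (hf : ∀ (g : G) v, f (g • v) = g • f v)
    (g : G) (x : ℙ K V) : f (g • x).rep ≠ 0 ↔ f x.rep ≠ 0 := by
  induction x using Projectivization.ind with | h v hv => ?_
  rw [smul_mk, map_rep_mk_ne_zero_iff, map_rep_mk_ne_zero_iff, hf, smul_ne_zero_iff_ne]

theorem mk_map_rep_smul [SMulCommClass G K W] (f : V →ₗ[K] W)
    (hf : ∀ (g : G) v, f (g • v) = g • f v) (g : G) (x : ℙ K V) (h : f (g • x).rep ≠ 0)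
    (h' : f x.rep ≠ 0) : mk K (f (g • x).rep) h = g • mk K (f x.rep) h' := by
  induction x using Projectivization.ind with | h v hv => ?_
  refine (mk_map_rep_mk f ((smul_ne_zero_iff_ne g).2 hv) h).trans ?_
  rw [mk_map_rep_mk f hv h', smul_mk]
  congr 1
  exact hf g v

end Linear

section Topology

variable {K V W : Type*} [DivisionRing K] [AddCommGroup V] [Module K V] [TopologicalSpace V]

theorem isQuotientMap_mk' : IsQuotientMap (mk' K : {v : V // v ≠ 0} → ℙ K V) :=
  isQuotientMap_quotient_mk'

theorem isOpenQuotientMap_mk' [ContinuousConstSMul K V] :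
    IsOpenQuotientMap (mk' K : {v : V // v ≠ 0} → ℙ K V) := by
  refine ⟨isQuotientMap_mk'.surjective, isQuotientMap_mk'.continuous, fun S hS => ?_⟩
  have hsat : mk' K ⁻¹' (mk' K '' S) = ⋃ a : Kˣ, (fun v : {v : V // v ≠ 0} =>
      (⟨a • v.1, (smul_ne_zero_iff_ne a).2 v.2⟩ : {v : V // v ≠ 0})) ⁻¹' S := by
    ext v
    simp only [mem_preimage, mem_image, mem_iUnion, mk'_eq_mk, mk_eq_mk_iff]
    constructor
    · rintro ⟨w, hw, a, ha⟩
      exact ⟨a, by convert hw⟩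
    · rintro ⟨a, ha⟩
      exact ⟨_, ha, a, rfl⟩
  rw [← isQuotientMap_mk'.isOpen_preimage, hsat]
  exact isOpen_iUnion fun a =>
    hS.preimage (((continuous_const_smul a).comp continuous_subtype_val).subtype_mk _)

theorem continuous_mk {X : Type*} [TopologicalSpace X] {f : X → V} (hf : Continuous f)
    (hf₀ : ∀ x, f x ≠ 0) : Continuous fun x => mk K (f x) (hf₀ x) :=
  isQuotientMap_mk'.continuous.comp (hf.subtype_mk hf₀)

instance {G : Type*} [Group G] [TopologicalSpace G] [DistribMulAction G V] [SMulCommClass G K V]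
    [ContinuousSMul G V] [ContinuousConstSMul K V] : ContinuousSMul G (ℙ K V) :=
  ⟨(IsOpenQuotientMap.id.prodMap isOpenQuotientMap_mk').isQuotientMap.continuous_iff.2 <|
    continuous_mk (continuous_fst.smul (continuous_subtype_val.comp continuous_snd)) _⟩

variable [AddCommGroup W] [Module K W] [TopologicalSpace W]

theorem isOpen_setOf_map_rep_ne_zero [T1Space W] (f : V →ₗ[K] W) (hf : Continuous f) :
    IsOpen {x : ℙ K V | f x.rep ≠ 0} := by
  have hpre : mk' K ⁻¹' {x : ℙ K V | f x.rep ≠ 0} = {v : {v : V // v ≠ 0} | f v ≠ 0} :=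
    Set.ext fun v => map_rep_mk_ne_zero_iff f v.2
  rw [← isQuotientMap_mk'.isOpen_preimage, hpre]
  exact isOpen_ne.preimage (hf.comp continuous_subtype_val)

theorem continuous_mk_map_rep [ContinuousConstSMul K V] (f : V →ₗ[K] W) (hf : Continuous f) :
    Continuous fun x : {x : ℙ K V // f x.rep ≠ 0} => mk K (f x.1.rep) x.2 := by
  have hq := (isOpenQuotientMap_mk' (K := K) (V := V)).restrictPreimage {x | f x.rep ≠ 0}
  rw [hq.isQuotientMap.continuous_iff]
  refine (continuous_mk (hf.comp (continuous_subtype_val.comp continuous_subtype_val))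
    fun w => (map_rep_mk_ne_zero_iff f w.1.2).1 w.2).congr fun w => ?_
  exact (mk_map_rep_mk f w.1.2 w.2).symm

end Topology

theorem continuousOn_map_rep_div_map_rep {F V : Type*} [Field F] [TopologicalSpace F]
    [IsTopologicalDivisionRing F] [T1Space F] [AddCommGroup V] [Module F V] [TopologicalSpace V]
    (φ ψ : V →ₗ[F] F) (hφ : Continuous φ) (hψ : Continuous ψ) :
    ContinuousOn (fun x : ℙ F V => ψ x.rep / φ x.rep) {x | φ x.rep ≠ 0} := by
  rw [isQuotientMap_mk'.continuousOn_isOpen_iff (isOpen_setOf_map_rep_ne_zero φ hφ)]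
  refine ((hψ.comp continuous_subtype_val).continuousOn.div
    (hφ.comp continuous_subtype_val).continuousOn
    fun v hv => (map_rep_mk_ne_zero_iff φ v.2).1 hv).congr fun v _ => ?_
  obtain ⟨a, ha⟩ := exists_smul_eq_mk_rep F v.1 v.2
  simp only [Function.comp_apply, mk'_eq_mk, ← ha, Units.smul_def, map_smul, smul_eq_mul]
  exact mul_div_mul_left _ _ a.ne_zero

open Matrix.GeneralLinearGroup in
theorem exists_localSection_smul_mk_zero_one {F : Type*} [Field F]
    [TopologicalSpace F] [IsTopologicalDivisionRing F] [T1Space F] (b : ℙ F (Fin 2 → F)) :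
    ∃ U : Set (ℙ F (Fin 2 → F)), IsOpen U ∧ b ∈ U ∧ ∃ s : ℙ F (Fin 2 → F) → GL (Fin 2) F,
      ContinuousOn s U ∧ ∀ c ∈ U, s c • mk F ![0, 1] (by simp) = c := by
  by_cases hb : b.rep 1 = 0
  · have hb₀ : b.rep 0 ≠ 0 := fun h => b.rep_nonzero (by ext i; fin_cases i <;> assumption)
    refine ⟨{c | LinearMap.proj 0 c.rep ≠ 0}, isOpen_setOf_map_rep_ne_zero _ (continuous_apply 0),
      hb₀, fun c => swap F 0 1 * upperRightHom (c.rep 1 / c.rep 0), ?_, fun c hc => ?_⟩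
    · exact continuousOn_const.mul (continuous_upperRightHom.comp_continuousOn
        (continuousOn_map_rep_div_map_rep (LinearMap.proj (R := F) (φ := fun _ : Fin 2 => F) 0)
          (LinearMap.proj 1) (continuous_apply 0) (continuous_apply 1)))
    · have hc : c.rep 0 ≠ 0 := hc
      conv_rhs => rw [← mk_rep c]
      rw [smul_mk, mk_eq_mk_iff']
      refine ⟨(c.rep 0)⁻¹, ?_⟩
      ext i; fin_cases i <;> simp [Units.smul_def, upperRightHom_apply, hc, inv_mul_eq_div]
  · refine ⟨{c | LinearMap.proj 1 c.rep ≠ 0}, isOpen_setOf_map_rep_ne_zero _ (continuous_apply 1),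
      hb, fun c => upperRightHom (c.rep 0 / c.rep 1), ?_, fun c hc => ?_⟩
    · exact continuous_upperRightHom.comp_continuousOn
        (continuousOn_map_rep_div_map_rep (LinearMap.proj (R := F) (φ := fun _ : Fin 2 => F) 1)
          (LinearMap.proj 0) (continuous_apply 1) (continuous_apply 0))
    · have hc : c.rep 1 ≠ 0 := hc
      conv_rhs => rw [← mk_rep c]
      rw [smul_mk, mk_eq_mk_iff']
      refine ⟨(c.rep 1)⁻¹, ?_⟩
      ext i; fin_cases i <;> simp [Units.smul_def, upperRightHom_apply, hc, inv_mul_eq_div]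

end Projectivization

namespace PairSpace

variable {d : ℕ}

instance : SMul (GL (Fin 2) ℂ) (PairSpace d) where
  smul g v := (g 0 0 • v.1 + g 0 1 • v.2, g 1 0 • v.1 + g 1 1 • v.2)

theorem smul_def (g : GL (Fin 2) ℂ) (v : PairSpace d) :
    g • v = (g 0 0 • v.1 + g 0 1 • v.2, g 1 0 • v.1 + g 1 1 • v.2) := rfl

instance : DistribMulAction (GL (Fin 2) ℂ) (PairSpace d) where
  one_smul v := by simp [smul_def]
  mul_smul g h v := by
    simp only [smul_def, Units.val_mul, Matrix.mul_apply, Fin.sum_univ_two, Prod.mk.injEq]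
    constructor <;> module
  smul_zero g := by simp [smul_def]
  smul_add g v w := by
    simp only [smul_def, Prod.fst_add, Prod.snd_add, Prod.mk_add_mk, Prod.mk.injEq]
    constructor <;> module

instance : SMulCommClass (GL (Fin 2) ℂ) ℂ (PairSpace d) where
  smul_comm g c v := by
    simp only [smul_def, Prod.smul_fst, Prod.smul_snd, Prod.smul_mk, Prod.mk.injEq]
    constructor <;> module

instance : ContinuousSMul (GL (Fin 2) ℂ) (PairSpace d) where
  continuous_smul := by
    simp only [smul_def]
    fun_prop

def leadingCoeffs (d : ℕ) : PairSpace d →ₗ[ℂ] Fin 2 → ℂ where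
  toFun v := ![v.1 (Fin.last d), v.2 (Fin.last d)]
  map_add' v w := by ext i; fin_cases i <;> simp
  map_smul' c v := by ext i; fin_cases i <;> simp

theorem leadingCoeffs_smul (g : GL (Fin 2) ℂ) (v : PairSpace d) :
    leadingCoeffs d (g • v) = g • leadingCoeffs d v := by
  ext i; fin_cases i <;> simp [leadingCoeffs, smul_def, Units.smul_def]

end PairSpace

namespace EE

open Projectivization PairSpace

variable {d : ℕ}

instance : MulAction (GL (Fin 2) ℂ) (EE d) where
  smul g e := ⟨g • e.1, (map_rep_smul_ne_zero_iff (leadingCoeffs d) leadingCoeffs_smul g e.1).2 e.2⟩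
  one_smul e := Subtype.ext (one_smul _ e.1)
  mul_smul g h e := Subtype.ext (mul_smul g h e.1)

instance : ContinuousSMul (GL (Fin 2) ℂ) (EE d) :=
  ⟨(continuous_fst.smul (continuous_subtype_val.comp continuous_snd)).subtype_mk _⟩

theorem continuous_pr : Continuous (pr d) :=
  continuous_mk_map_rep (leadingCoeffs d) (LinearMap.continuous_of_finiteDimensional _)

theorem pr_smul (g : GL (Fin 2) ℂ) (e : EE d) : pr d (g • e) = g • pr d e :=
  mk_map_rep_smul (leadingCoeffs d) leadingCoeffs_smul g e.1 _ e.2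

theorem nonempty_pr_preimage_mk_zero_one :
    (pr d ⁻¹' {mk ℂ ![0, 1] (by simp)}).Nonempty := by
  have h₀ : leadingCoeffs d ((0, 1) : PairSpace d) = ![0, 1] := by ext i; fin_cases i <;> rfl
  have h₀' : leadingCoeffs d ((0, 1) : PairSpace d) ≠ 0 := by simp [h₀]
  refine ⟨⟨mk ℂ ((0, 1) : PairSpace d) (fun h => h₀' (by rw [h, map_zero])),
    (map_rep_mk_ne_zero_iff _ _).2 h₀'⟩, ?_⟩
  exact (mk_map_rep_mk (leadingCoeffs d) _ _).trans (by simp only [h₀])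

end EE

theorem stmt_4 (d : ℕ) :
    Continuous (pr d) ∧
    ∀ b : P1, ∃ t : Bundle.Trivialization
        (↥(pr d ⁻¹' {Projectivization.mk ℂ ![0, 1] (by
          intro h; have := congrFun h 1; simp at this)})) (pr d),
      b ∈ t.baseSet := by
  refine ⟨EE.continuous_pr, fun b => ?_⟩
  have := EE.nonempty_pr_preimage_mk_zero_one (d := d) |>.to_subtype
  obtain ⟨U, hU, hb, s, hs, hsb⟩ := Projectivization.exists_localSection_smul_mk_zero_one b
  exact ⟨.ofOrbitMapSection (pr d) EE.continuous_pr EE.pr_smul _ hU s hs hsb, hb⟩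

end
end

section
/- With E and π : E → ℙ¹(ℂ) as above (pairs of polynomials of degree ≤ d with leading coefficients not both zero, modulo ℂ*), the family of fiber maps H_s([Σ α_j u^j : Σ β_j u^j]) = [α_d u^d + s Σ_{j<d} α_j u^j : β_d u^d + s Σ_{j<d} β_j u^j], for s ∈ [0,1], is a homotopy (through fiber-preserving maps) from the identity of E to a retraction of E onto the image of a section of π. Consequently every section of π is a homotopy inverse of π. -/
noncomputable section

/-- `e` is the class of the pair of coefficient vectors `(a, b)`. -/
def Represents (d : ℕ) (e : EE d) (a b : Fin (d + 1) → ℂ) : Prop :=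
  ∃ h : (a, b) ≠ (0 : PairSpace d), e.1 = Projectivization.mk ℂ (a, b) h

/-! ### Auxiliary development -/

open Projectivization Topology

namespace Stmt5

variable {d : ℕ}

/-- leading coefficients of a pair. -/
abbrev lead (v : PairSpace d) : Fin 2 → ℂ := ![v.1 (Fin.last d), v.2 (Fin.last d)]

/-- scaling the lower coefficients by `s`. -/
def Ls (d : ℕ) (s : ℝ) (v : PairSpace d) : PairSpace d :=
  (fun j => if j = Fin.last d then v.1 j else (s : ℂ) * v.1 j,
   fun j => if j = Fin.last d then v.2 j else (s : ℂ) * v.2 j)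

lemma lead_smul (c : ℂ) (v : PairSpace d) : lead (c • v) = c • lead v := by
  funext i; fin_cases i <;> simp

lemma ne_zero_of_lead {v : PairSpace d} (h : lead v ≠ 0) : v ≠ 0 := by
  intro hv; apply h; rw [hv]; funext i; fin_cases i <;> simp

lemma Ls_smul (s : ℝ) (c : ℂ) (v : PairSpace d) :
    Ls d s (c • v) = c • Ls d s v := by
  unfold Ls
  refine Prod.ext ?_ ?_ <;> funext j <;>
    by_cases h : j = Fin.last d <;> simp [h, smul_eq_mul] <;> ring

lemma lead_Ls (s : ℝ) (v : PairSpace d) : lead (Ls d s v) = lead v := by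
  funext i; fin_cases i <;> simp [Ls]

lemma Ls_one (v : PairSpace d) : Ls d 1 v = v := by
  unfold Ls
  refine Prod.ext ?_ ?_ <;> funext j <;> by_cases h : j = Fin.last d <;> simp [h]

lemma mk_lead_ne (v : PairSpace d) (hv : v ≠ 0) (h : lead v ≠ 0) :
    lead ((Projectivization.mk ℂ v hv).rep) ≠ 0 := by
  obtain ⟨c, hc⟩ := Projectivization.exists_smul_eq_mk_rep ℂ v hv
  rw [← hc, Units.smul_def, lead_smul]
  exact smul_ne_zero (Units.ne_zero c) h

lemma mk_congr {V : Type*} [AddCommGroup V] [Module ℂ V] {v w : V} (h : v = w)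
    (hv : v ≠ 0) :
    Projectivization.mk ℂ v hv = Projectivization.mk ℂ w (h ▸ hv) := by
  subst h; rfl

/-- the homotopy, fiberwise. -/
def Hmap (d : ℕ) (s : ℝ) (e : EE d) : EE d :=
  ⟨Projectivization.mk ℂ (Ls d s e.1.rep)
      (ne_zero_of_lead (by rw [lead_Ls]; exact e.2)),
   mk_lead_ne _ _ (by rw [lead_Ls]; exact e.2)⟩

lemma Hmap_mk (s : ℝ) (e : EE d) (w : PairSpace d) (hw : w ≠ 0)
    (he : e.1 = Projectivization.mk ℂ w hw) (hlw : Ls d s w ≠ 0) :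
    (Hmap d s e).1 = Projectivization.mk ℂ (Ls d s w) hlw := by
  obtain ⟨c, hc⟩ := Projectivization.exists_smul_eq_mk_rep ℂ w hw
  have hrep : e.1.rep = (c : ℂ) • w := by rw [he, ← hc, Units.smul_def]
  show Projectivization.mk ℂ (Ls d s e.1.rep) _ = _
  rw [Projectivization.mk_eq_mk_iff']
  exact ⟨c, by rw [← Ls_smul, ← hrep]⟩

lemma Hmap_one (e : EE d) : Hmap d 1 e = e := by
  apply Subtype.ext
  show Projectivization.mk ℂ (Ls d 1 e.1.rep) _ = e.1
  rw [mk_congr (Ls_one e.1.rep)]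
  exact Projectivization.mk_rep e.1

lemma pr_mk (e : EE d) (w : PairSpace d) (hw : w ≠ 0)
    (he : e.1 = Projectivization.mk ℂ w hw) (hl : lead w ≠ 0) :
    pr d e = Projectivization.mk ℂ (lead w) hl := by
  obtain ⟨c, hc⟩ := Projectivization.exists_smul_eq_mk_rep ℂ w hw
  have hrep : e.1.rep = (c : ℂ) • w := by rw [he, ← hc, Units.smul_def]
  unfold pr
  rw [Projectivization.mk_eq_mk_iff']
  refine ⟨c, ?_⟩
  show (c : ℂ) • lead w = lead e.1.rep
  rw [hrep, lead_smul]

lemma pr_Hmap (s : ℝ) (e : EE d) : pr d (Hmap d s e) = pr d e := by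
  have h1 : lead (Ls d s e.1.rep) ≠ 0 := by rw [lead_Ls]; exact e.2
  rw [pr_mk (Hmap d s e) (Ls d s e.1.rep) (ne_zero_of_lead h1) rfl h1,
    mk_congr (lead_Ls s e.1.rep)]
  rfl

/-- lift of a point of ℙ¹ to a pair of monomials. -/
def lift0 (d : ℕ) (w : Fin 2 → ℂ) : PairSpace d :=
  (fun j => if j = Fin.last d then w 0 else 0,
   fun j => if j = Fin.last d then w 1 else 0)

lemma lead_lift0 (w : Fin 2 → ℂ) : lead (lift0 d w) = w := by
  funext i; fin_cases i <;> simp [lift0]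

lemma lift0_smul (c : ℂ) (w : Fin 2 → ℂ) :
    lift0 d (c • w) = c • lift0 d w := by
  unfold lift0
  refine Prod.ext ?_ ?_ <;> funext j <;> by_cases h : j = Fin.last d <;>
    simp [h, smul_eq_mul]

lemma Ls_zero (v : PairSpace d) : Ls d 0 v = lift0 d (lead v) := by
  unfold Ls lift0
  refine Prod.ext ?_ ?_ <;> funext j <;> by_cases h : j = Fin.last d <;> simp [h]

/-- the canonical section of `pr`. -/
def sigma0 (d : ℕ) (x : P1) : EE d :=
  ⟨Projectivization.mk ℂ (lift0 d x.rep)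
      (ne_zero_of_lead (by rw [lead_lift0]; exact x.rep_nonzero)),
   mk_lead_ne _ _ (by rw [lead_lift0]; exact x.rep_nonzero)⟩

lemma sigma0_mk (w : Fin 2 → ℂ) (hw : w ≠ 0)
    (h : lift0 d w ≠ 0) :
    (sigma0 d (Projectivization.mk ℂ w hw)).1 = Projectivization.mk ℂ (lift0 d w) h := by
  obtain ⟨c, hc⟩ := Projectivization.exists_smul_eq_mk_rep ℂ w hw
  show Projectivization.mk ℂ (lift0 d (Projectivization.mk ℂ w hw).rep) _ = _
  rw [Projectivization.mk_eq_mk_iff']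
  exact ⟨c, by rw [← lift0_smul, ← Units.smul_def, hc]⟩

lemma pr_sigma0 (x : P1) : pr d (sigma0 d x) = x := by
  have h : lead (lift0 d x.rep) ≠ 0 := by rw [lead_lift0]; exact x.rep_nonzero
  rw [pr_mk (sigma0 d x) (lift0 d x.rep) (ne_zero_of_lead h) rfl h,
    mk_congr (lead_lift0 x.rep)]
  exact Projectivization.mk_rep x

lemma Hmap_zero (e : EE d) : Hmap d 0 e = sigma0 d (pr d e) := by
  apply Subtype.ext
  have h : lift0 d (lead e.1.rep) ≠ 0 := by
    apply ne_zero_of_lead; rw [lead_lift0]; exact e.2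
  show Projectivization.mk ℂ (Ls d 0 e.1.rep) _ = _
  rw [mk_congr (Ls_zero e.1.rep)]
  exact (sigma0_mk (lead e.1.rep) e.2 h).symm

/-! ### Topology -/

/-- nonzero pairs. -/
abbrev Nz (d : ℕ) := {v : PairSpace d // v ≠ 0}

/-- quotient map onto the projectivization. -/
def qP (d : ℕ) : Nz d → Projectivization ℂ (PairSpace d) := Quotient.mk''

lemma isQuotientMap_qP : IsQuotientMap (qP d) := isQuotientMap_quot_mk

lemma isOpenMap_qP : IsOpenMap (qP d) := by
  intro U hU
  rw [← (isQuotientMap_qP (d := d)).isOpen_preimage]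
  have key : qP d ⁻¹' (qP d '' U) =
      ⋃ c : ℂˣ, (fun v : Nz d =>
        (⟨(c : ℂ) • v.1, smul_ne_zero (Units.ne_zero c) v.2⟩ : Nz d)) ⁻¹' U := by
    ext v
    simp only [Set.mem_preimage, Set.mem_image, Set.mem_iUnion]
    constructor
    · rintro ⟨u, hu, huv⟩
      have h1 : (u : PairSpace d) ∈ MulAction.orbit ℂˣ (v : PairSpace d) :=
        Quotient.eq''.mp huv
      obtain ⟨c, hc⟩ := MulAction.mem_orbit_iff.mp h1
      refine ⟨c, ?_⟩
      have he : (⟨(c : ℂ) • v.1, smul_ne_zero (Units.ne_zero c) v.2⟩ : Nz d) = u :=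
        Subtype.ext (show (c : ℂ) • (v : PairSpace d) = u by
          rw [← hc]; exact (Units.smul_def c (v : PairSpace d)).symm)
      rw [he]; exact hu
    · rintro ⟨c, hc⟩
      refine ⟨_, hc, ?_⟩
      exact Quotient.eq''.mpr (MulAction.mem_orbit_iff.mpr ⟨c, by rw [Units.smul_def]⟩)
  rw [key]
  exact isOpen_iUnion fun c =>
    hU.preimage ((continuous_subtype_val.const_smul ((c : ℂˣ) : ℂ)).subtype_mk _)

lemma isOpenQuotientMap_qP : IsOpenQuotientMap (qP d) :=
  ⟨(isQuotientMap_qP).surjective, (isQuotientMap_qP).continuous, isOpenMap_qP⟩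

/-- nonzero pairs with nonzero leading coefficients. -/
abbrev SS (d : ℕ) := {v : Nz d // lead v.1 ≠ 0}

/-- quotient map onto `EE d`. -/
def qE (d : ℕ) (v : SS d) : EE d := ⟨qP d v.1, mk_lead_ne v.1.1 v.1.2 v.2⟩

lemma continuous_qE : Continuous (qE d) :=
  ((isQuotientMap_qP).continuous.comp continuous_subtype_val).subtype_mk _

lemma surjective_qE : Function.Surjective (qE d) := by
  intro e
  refine ⟨⟨⟨e.1.rep, e.1.rep_nonzero⟩, e.2⟩, ?_⟩
  apply Subtype.ext
  exact Projectivization.mk_rep e.1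

lemma isOpenMap_qE : IsOpenMap (qE d) := by
  intro W hW
  have hSopen : IsOpen {v : Nz d | lead v.1 ≠ 0} := by
    have hc : Continuous fun v : Nz d => lead v.1 := by
      apply continuous_pi; intro i; fin_cases i <;> simp <;> fun_prop
    exact isOpen_ne.preimage hc
  have hWN : IsOpen (Subtype.val '' W) :=
    hSopen.isOpenEmbedding_subtypeVal.isOpenMap W hW
  refine isOpen_induced_iff.mpr ⟨qP d '' (Subtype.val '' W), isOpenMap_qP _ hWN, ?_⟩
  ext e
  simp only [Set.mem_preimage, Set.mem_image]
  constructor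
  · rintro ⟨x, ⟨w, hwW, rfl⟩, hxe⟩
    exact ⟨w, hwW, Subtype.ext hxe⟩
  · rintro ⟨w, hwW, rfl⟩
    exact ⟨w.1, ⟨w, hwW, rfl⟩, rfl⟩

lemma isOpenQuotientMap_qE : IsOpenQuotientMap (qE d) :=
  ⟨surjective_qE, continuous_qE, isOpenMap_qE⟩

lemma continuous_Hmap : Continuous (fun p : ℝ × EE d => Hmap d p.1 p.2) := by
  have hq : IsQuotientMap (Prod.map (id : ℝ → ℝ) (qE d)) :=
    (IsOpenQuotientMap.id.prodMap isOpenQuotientMap_qE).isQuotientMap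
  rw [hq.continuous_iff]
  have key : ∀ p : ℝ × SS d, lead (Ls d p.1 p.2.1.1) ≠ 0 := fun p => by
    rw [lead_Ls]; exact p.2.2
  have hLs : Continuous fun p : ℝ × SS d => Ls d p.1 p.2.1.1 := by
    unfold Ls
    apply Continuous.prodMk <;>
    · apply continuous_pi; intro j
      by_cases h : j = Fin.last d <;> simp only [h, if_true, if_false, if_pos, if_neg,
        not_false_iff] <;> fun_prop
  have hg : Continuous fun p : ℝ × SS d =>
      (⟨qP d ⟨Ls d p.1 p.2.1.1, ne_zero_of_lead (key p)⟩,
        mk_lead_ne _ _ (key p)⟩ : EE d) := by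
    apply Continuous.subtype_mk
    exact (isQuotientMap_qP).continuous.comp (hLs.subtype_mk _)
  apply hg.congr
  intro p
  apply Subtype.ext
  exact (Hmap_mk p.1 (qE d p.2) p.2.1.1 p.2.1.2 rfl (ne_zero_of_lead (key p))).symm

lemma continuous_pr : Continuous (pr d) := by
  rw [(isOpenQuotientMap_qE (d := d)).isQuotientMap.continuous_iff]
  have hl : Continuous fun v : SS d => lead v.1.1 := by
    apply continuous_pi; intro i; fin_cases i <;> simp <;> fun_prop
  have hc : Continuous fun v : SS d => (Projectivization.mk ℂ (lead v.1.1) v.2 : P1) := by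
    show Continuous fun v : SS d =>
      (Quotient.mk'' (⟨lead v.1.1, v.2⟩ : {w : Fin 2 → ℂ // w ≠ 0}) : P1)
    exact continuous_quot_mk.comp (hl.subtype_mk _)
  apply hc.congr
  intro v
  exact (pr_mk (qE d v) v.1.1 v.1.2 rfl v.2).symm

lemma continuous_sigma0 : Continuous (sigma0 d) := by
  have hq : IsQuotientMap (fun w : {w : Fin 2 → ℂ // w ≠ 0} => (Quotient.mk'' w : P1)) :=
    isQuotientMap_quot_mk
  apply hq.continuous_iff.mpr
  have key : ∀ w : {w : Fin 2 → ℂ // w ≠ 0}, lift0 d w.1 ≠ 0 := fun w =>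
    ne_zero_of_lead (by rw [lead_lift0]; exact w.2)
  have key2 : ∀ w : {w : Fin 2 → ℂ // w ≠ 0}, lead (lift0 d w.1) ≠ 0 := fun w => by
    rw [lead_lift0]; exact w.2
  have hg : Continuous fun w : {w : Fin 2 → ℂ // w ≠ 0} =>
      (⟨qP d ⟨lift0 d w.1, key w⟩, mk_lead_ne _ _ (key2 w)⟩ : EE d) := by
    apply Continuous.subtype_mk
    apply (isQuotientMap_qP).continuous.comp
    apply Continuous.subtype_mk
    unfold lift0
    apply Continuous.prodMk <;>
    · apply continuous_pi; intro j
      by_cases h : j = Fin.last d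
      · simp only [if_pos h]
        exact (continuous_apply _).comp continuous_subtype_val
      · simp only [if_neg h]
        exact continuous_const
  apply hg.congr
  intro w
  apply Subtype.ext
  exact (sigma0_mk w.1 w.2 (key w)).symm

end Stmt5

open Stmt5

/- STATEMENT 5: The fiberwise maps
H_s [Σαⱼuʲ : Σβⱼuʲ] = [α_d u^d + s Σ_{j<d} αⱼuʲ : β_d u^d + s Σ_{j<d} βⱼuʲ]
form a homotopy (through fiber-preserving maps) from the identity of E (s = 1)
to a retraction of E onto the image of a section of π (s = 0). Consequently
every continuous section of π is a homotopy inverse of π. -/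
theorem stmt_5 (d : ℕ) (hd : 1 ≤ d) :
    (∃ H : ℝ → EE d → EE d,
      Continuous (fun p : ℝ × EE d => H p.1 p.2) ∧
      (∀ e, H 1 e = e) ∧
      (∀ s e, pr d (H s e) = pr d e) ∧          -- each H_s is a fiber map
      -- H_s acts on coefficients by keeping the leading ones and scaling the
      -- lower ones by s:
      (∀ (s : ℝ) (e : EE d) (a b : Fin (d + 1) → ℂ), Represents d e a b →
        Represents d (H s e)
          (fun j => if j = Fin.last d then a j else (s : ℂ) * a j)
          (fun j => if j = Fin.last d then b j else (s : ℂ) * b j)) ∧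
      -- H_0 retracts E onto the image of a section of π:
      (∃ σ : P1 → EE d, Continuous σ ∧ (∀ x, pr d (σ x) = x) ∧
        ∀ e, H 0 e ∈ Set.range σ)) ∧
    -- consequently, every continuous section of π is a homotopy inverse of π:
    (∀ σ : P1 → EE d, Continuous σ → (∀ x, pr d (σ x) = x) →
      ∃ K : C(ℝ × EE d, EE d),
        (∀ e, K (0, e) = σ (pr d e)) ∧ (∀ e, K (1, e) = e)) := by
  constructor
  · refine ⟨Hmap d, continuous_Hmap, Hmap_one, pr_Hmap, ?_, ?_⟩
    · rintro s e a b ⟨h, he⟩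
      have hlab : lead ((a, b) : PairSpace d) ≠ 0 := by
        obtain ⟨c, hc⟩ :=
          Projectivization.exists_smul_eq_mk_rep ℂ ((a, b) : PairSpace d) h
        intro h0
        apply e.2
        show lead e.1.rep = 0
        rw [he, ← hc, Units.smul_def, lead_smul, h0, smul_zero]
      have hl : lead (Ls d s (a, b)) ≠ 0 := by rw [lead_Ls]; exact hlab
      exact ⟨ne_zero_of_lead hl, Hmap_mk s e (a, b) h he (ne_zero_of_lead hl)⟩
    · exact ⟨sigma0 d, continuous_sigma0, pr_sigma0,
        fun e => ⟨pr d e, (Hmap_zero e).symm⟩⟩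
  · intro σ hσ hsec
    refine ⟨⟨fun p => if p.1 ≤ 1/2 then Hmap d (1 - 2*p.1) (σ (pr d p.2))
        else Hmap d (2*p.1 - 1) p.2, ?_⟩, ?_, ?_⟩
    · apply Continuous.if_le
      · exact continuous_Hmap.comp
          ((by fun_prop : Continuous fun p : ℝ × EE d => 1 - 2*p.1).prodMk
            (hσ.comp (continuous_pr.comp continuous_snd)))
      · exact continuous_Hmap.comp
          ((by fun_prop : Continuous fun p : ℝ × EE d => 2*p.1 - 1).prodMk
            continuous_snd)
      · exact continuous_fst
      · exact continuous_const
      · intro p hp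
        have h1 : (1 - 2*p.1 : ℝ) = 0 := by rw [hp]; norm_num
        have h2 : (2*p.1 - 1 : ℝ) = 0 := by rw [hp]; norm_num
        rw [h1, h2, Hmap_zero, Hmap_zero, hsec]
    · intro e
      simp only [ContinuousMap.coe_mk]
      rw [if_pos (by norm_num : ((0:ℝ), e).1 ≤ 1/2)]
      show Hmap d (1 - 2*(0:ℝ)) (σ (pr d e)) = σ (pr d e)
      rw [show (1 - 2*(0:ℝ)) = 1 by norm_num]
      exact Hmap_one _
    · intro e
      simp only [ContinuousMap.coe_mk]
      rw [if_neg (by norm_num : ¬ ((1:ℝ), e).1 ≤ 1/2)]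
      show Hmap d (2*(1:ℝ) - 1) e = e
      rw [show (2*(1:ℝ) - 1) = 1 by norm_num]
      exact Hmap_one _


end
end
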